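/- Every computable graph has a computable copy in which the set of universal vertices is computable. -/

import Mathlib

/-!
If the universal vertices of `G` form a computable set, `G` itself is the required copy.
Otherwise that set is infinite and coinfinite, since finite and cofinite sets are computable.
Its complement is c.e. (a vertex is not universal iff it has a non-neighbour other than
itself), so it is enumerated without repetitions by a computable `u`. Relabel `G` along a
bijection sending the even numbers onto the universal vertices and `2 k + 1` to `u k`. In the
copy, the universal vertices are exactly the even numbers, and two vertices are adjacent iff
they are distinct and one of them is even, or both are odd and their `u`-images are adjacent
in `G`: a decidable condition.
-/

open Function Set

namespace ComputablePred

variable {α β : Type*} [Primcodable α] [Primcodable β]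

theorem comp {p : β → Prop} {f : α → β} (hp : ComputablePred p) (hf : Computable f) :
    ComputablePred fun a => p (f a) := by
  classical
  exact (hp.decide.comp hf).computablePred

protected theorem and {p q : α → Prop} (hp : ComputablePred p) (hq : ComputablePred q) :
    ComputablePred fun a => p a ∧ q a := by
  classical
  exact Computable.computablePred <|
    (Primrec.and.to_comp.comp hp.decide hq.decide).of_eq fun a => by simp

protected theorem or {p q : α → Prop} (hp : ComputablePred p) (hq : ComputablePred q) :
    ComputablePred fun a => p a ∨ q a := by
  classical
  exact Computable.computablePred <|
    (Primrec.or.to_comp.comp hp.decide hq.decide).of_eq fun a => by simp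

theorem of_finite {p : α → Prop} (hp : {a | p a}.Finite) : ComputablePred p := by
  obtain ⟨l, hl⟩ : ∃ l : List α, ∀ a, p a ↔ a ∈ l := ⟨hp.toFinset.toList, fun a => by simp⟩
  exact (Primrec.eq.exists_mem_list.comp (Primrec.const l) Primrec.id).computablePred.of_eq
    fun a => by simp [hl]

theorem forall_lt {P : α → ℕ → Prop} (hP : ComputablePred fun q : α × ℕ => P q.1 q.2) :
    ComputablePred fun q : α × ℕ => ∀ n < q.2, P q.1 n := by
  classical
  -- the first `n` with `¬ P a n ∨ n = m` always exists, and it is `m` exactly when the bounded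
  -- quantifier holds
  have hex (q : α × ℕ) : ∃ n, ¬P q.1 n ∨ n = q.2 := ⟨q.2, Or.inr rfl⟩
  have hfind : Computable fun q : α × ℕ => Nat.find (hex q) :=
    Computable.find (P := fun (q : α × ℕ) n => ¬P q.1 n ∨ n = q.2)
      ((hP.comp ((Computable.fst.comp Computable.fst).pair Computable.snd)).not.or
        (Primrec.eq.computablePred.comp (Computable.snd.pair (Computable.snd.comp Computable.fst))))
      hex
  refine (Primrec.eq.computablePred.comp (hfind.pair Computable.snd)).of_eq fun q => ?_
  simp +contextual [Nat.find_eq_iff, Nat.ne_of_lt]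

theorem nat_even : ComputablePred (Even : ℕ → Prop) :=
  (Primrec.eq.comp (Primrec.nat_mod.comp .id (.const 2)) (.const 0)).computablePred.of_eq
    fun _ => Nat.even_iff.symm

end ComputablePred

theorem Computable.nat_nth {p : ℕ → Prop} (hp : ComputablePred p) (hinf : {n | p n}.Infinite) :
    Computable (Nat.nth p) := by
  classical
  have hex (m : ℕ) : ∃ n, m ≤ n ∧ p n :=
    let ⟨n, hn, hmn⟩ := hinf.exists_gt m; ⟨n, hmn.le, hn⟩
  have hnext : Computable fun m => Nat.find (hex m) :=
    Computable.find (P := fun m n => m ≤ n ∧ p n)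
      (Primrec.nat_le.computablePred.and (hp.comp Computable.snd)) hex
  -- since `Nat.count p (Nat.nth p k + 1) = k + 1`, at `m = Nat.nth p k + 1` this is `Nat.nth p (k + 1)`
  have hnth_count (m : ℕ) : Nat.nth p (Nat.count p m) = Nat.find (hex m) := by
    have hne : {n | p n ∧ m ≤ n}.Nonempty := ⟨_, (Nat.find_spec (hex m)).symm⟩
    rw [Nat.nth_count_eq_sInf, eq_comm, Nat.find_eq_iff]
    exact ⟨(Nat.sInf_mem hne).symm, fun n hn h => Nat.notMem_of_lt_sInf hn h.symm⟩
  refine (Computable.nat_rec Computable.id (Computable.const (Nat.find (hex 0)))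
    (hnext.comp (Computable.succ.comp (Computable.snd.comp Computable.snd))).to₂).of_eq
    fun k => ?_
  induction k with
  | zero => simpa using (hnth_count 0).symm
  | succ k ih =>
    simp only [id] at ih ⊢
    rw [ih, ← hnth_count, Nat.count_nth_succ_of_infinite hinf]

theorem exists_computable_injective_range_eq_setOf_exists {R : ℕ → ℕ → Prop}
    (hR : ComputablePred fun q : ℕ × ℕ => R q.1 q.2) (hinf : {x | ∃ y, R x y}.Infinite) :
    ∃ u : ℕ → ℕ, Computable u ∧ Injective u ∧ range u = {x | ∃ y, R x y} := by
  classical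
  -- taking only least witnesses makes the first projection injective on `T`
  set T : ℕ → Prop := fun n => R n.unpair.1 n.unpair.2 ∧ ∀ y < n.unpair.2, ¬R n.unpair.1 y
  have hT : ComputablePred T :=
    (hR.and (hR.not.forall_lt (P := fun x y => ¬R x y))).comp Primrec.unpair.to_comp
  have himage : (fun n => n.unpair.1) '' {n | T n} = {x | ∃ y, R x y} := by
    ext x
    refine ⟨fun ⟨n, hn, hx⟩ => hx ▸ ⟨_, hn.1⟩, fun hx => ⟨Nat.pair x (Nat.find hx), ?_, by simp⟩⟩
    simp only [T, mem_ofPred_eq, Nat.unpair_pair]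
    exact ⟨Nat.find_spec hx, fun y => Nat.find_min hx⟩
  have hinjOn : InjOn (fun n => n.unpair.1) {n | T n} := by
    intro n ⟨hRn, hminn⟩ n' ⟨hRn', hminn'⟩ (hx : n.unpair.1 = n'.unpair.1)
    rw [← hx] at hRn' hminn'
    have hy : n.unpair.2 = n'.unpair.2 :=
      le_antisymm (not_lt.1 fun h => hminn _ h hRn') (not_lt.1 fun h => hminn' _ h hRn)
    exact Nat.pairEquiv.symm.injective (Prod.ext hx hy)
  have hTinf : {n | T n}.Infinite := Set.Infinite.of_image _ (himage ▸ hinf)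
  refine ⟨fun k => (Nat.nth T k).unpair.1,
    Computable.fst.comp (Primrec.unpair.to_comp.comp (Computable.nat_nth hT hTinf)),
    fun a b h => Nat.nth_injective hTinf
      (hinjOn (Nat.nth_mem_of_infinite hTinf a) (Nat.nth_mem_of_infinite hTinf b) h), ?_⟩
  rw [← himage, ← Nat.range_nth_of_infinite hTinf, ← range_comp]
  rfl

theorem exists_equiv_nat_even_odd {W : Type*} [Countable W] {p : W → Prop}
    (hp : {w | p w}.Infinite) {u : ℕ → W} (hu : Injective u) (hrange : range u = {w | ¬p w}) :
    ∃ f : ℕ ≃ W, (∀ k, p (f (2 * k))) ∧ ∀ k, f (2 * k + 1) = u k := by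
  classical
  have : Infinite {w // p w} := hp.to_subtype
  have : Encodable {w // p w} := Encodable.ofCountable _
  have : Denumerable {w // p w} := Denumerable.ofEncodableOfInfinite _
  have hmem (k : ℕ) : ¬p (u k) := hrange.subset (mem_range_self k)
  let u' : ℕ ≃ {w // ¬p w} := Equiv.ofBijective (fun k => ⟨u k, hmem k⟩)
    ⟨fun a b h => hu (congrArg Subtype.val h), fun ⟨w, hw⟩ => by
      obtain ⟨k, rfl⟩ : w ∈ range u := hrange ▸ hw
      exact ⟨k, rfl⟩⟩
  refine ⟨Equiv.natSumNatEquivNat.symm.trans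
    (((Denumerable.eqv _).symm.sumCongr u').trans (Equiv.sumCompl p)), fun k => ?_, fun k => ?_⟩
  · simpa using ((Denumerable.eqv {w // p w}).symm k).2
  · simp
    rfl

namespace SimpleGraph

variable {V W : Type*} {G : SimpleGraph W}

lemma isUniversal_iff_forall_ne {v : W} : G.IsUniversal v ↔ ∀ w, w ≠ v → G.Adj v w :=
  ⟨fun h _ hw => h hw.symm, fun h _ hw => h _ hw.symm⟩

lemma not_isUniversal_iff {v : W} : ¬G.IsUniversal v ↔ ∃ w, w ≠ v ∧ ¬G.Adj v w := by
  simp [isUniversal_iff_forall_ne]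

lemma IsUniversal.adj_iff {v w : W} (h : G.IsUniversal v) : G.Adj v w ↔ v ≠ w :=
  ⟨G.ne_of_adj, @h w⟩

lemma isUniversal_comap_equiv_iff (f : V ≃ W) {v : V} :
    (G.comap f).IsUniversal v ↔ G.IsUniversal (f v) := by
  refine ⟨fun h w hw => ?_, fun h _ hw => h (f.injective.ne hw)⟩
  simpa using @h (f.symm w) (by rintro rfl; simp at hw)

variable {f : ℕ ≃ W} {u : ℕ → W}

lemma comap_adj_iff_of_isUniversal_even (heven : ∀ k, G.IsUniversal (f (2 * k)))
    (hodd : ∀ k, f (2 * k + 1) = u k) (m n : ℕ) :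
    (G.comap f).Adj m n ↔ m ≠ n ∧ (Even m ∨ Even n ∨ G.Adj (u (m / 2)) (u (n / 2))) := by
  obtain ⟨k, rfl | rfl⟩ := Nat.even_or_odd' m <;> obtain ⟨j, rfl | rfl⟩ := Nat.even_or_odd' n
  · simp [(heven k).adj_iff, f.injective.ne_iff]
  · simp [(heven k).adj_iff, f.injective.ne_iff]
  · rw [comap_adj, G.adj_comm, (heven j).adj_iff]
    simp [f.injective.ne_iff, ne_comm]
  · have hdiv (i : ℕ) : (2 * i + 1) / 2 = i := by omega
    simp only [comap_adj, hodd, hdiv, Nat.not_even_bit1, false_or]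
    refine ⟨fun h => ⟨fun hkj => ?_, h⟩, And.right⟩
    obtain rfl : k = j := by omega
    exact G.irrefl h

lemma isUniversal_comap_iff_even (heven : ∀ k, G.IsUniversal (f (2 * k)))
    (hodd : ∀ k, f (2 * k + 1) = u k) (hu : ∀ k, ¬G.IsUniversal (u k)) (m : ℕ) :
    (G.comap f).IsUniversal m ↔ Even m := by
  rw [isUniversal_comap_equiv_iff]
  obtain ⟨k, rfl | rfl⟩ := Nat.even_or_odd' m
  · simpa using heven k
  · simpa [hodd] using hu k

end SimpleGraph

theorem SimpleGraph.computablePred_comap_adj {G : SimpleGraph ℕ}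
    (hG : ComputablePred fun q : ℕ × ℕ => G.Adj q.1 q.2) {f : ℕ ≃ ℕ} {u : ℕ → ℕ}
    (hu : Computable u) (heven : ∀ k, G.IsUniversal (f (2 * k)))
    (hodd : ∀ k, f (2 * k + 1) = u k) :
    ComputablePred fun q : ℕ × ℕ => (G.comap f).Adj q.1 q.2 := by
  have hhalf : Computable fun n : ℕ => u (n / 2) :=
    hu.comp (Primrec.nat_div.comp .id (.const 2)).to_comp
  refine (Primrec.eq.computablePred.not.and
    ((ComputablePred.nat_even.comp .fst).or ((ComputablePred.nat_even.comp .snd).or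
      (hG.comp ((hhalf.comp .fst).pair (hhalf.comp .snd)))))).of_eq fun q => ?_
  exact (comap_adj_iff_of_isUniversal_even heven hodd q.1 q.2).symm

/-- Every computable graph has a computable copy in which the set of
universal vertices is computable. -/
theorem computable_copy_with_computable_universal_set (G : SimpleGraph ℕ)
    (hG : ComputablePred fun p : ℕ × ℕ => G.Adj p.1 p.2) :
    ∃ H : SimpleGraph ℕ,
      ComputablePred (fun p : ℕ × ℕ => H.Adj p.1 p.2) ∧
      Nonempty (G ≃g H) ∧
      ComputablePred (fun x => ∀ y, y ≠ x → H.Adj x y) := by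
  simp_rw [← SimpleGraph.isUniversal_iff_forall_ne]
  by_cases hU : ComputablePred G.IsUniversal
  · exact ⟨G, hG, ⟨.refl⟩, hU⟩
  have hUinf : {x | G.IsUniversal x}.Infinite := fun h => hU (.of_finite h)
  have hNinf : {x | ¬G.IsUniversal x}.Infinite := fun h =>
    hU ((ComputablePred.of_finite h).not.of_eq fun _ => not_not)
  have hN : {x | ¬G.IsUniversal x} = {x | ∃ y, y ≠ x ∧ ¬G.Adj x y} :=
    ext fun _ => SimpleGraph.not_isUniversal_iff
  obtain ⟨u, hu, hu_inj, hu_range⟩ := exists_computable_injective_range_eq_setOf_exists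
    ((Primrec.eq.computablePred.comp (Computable.snd.pair Computable.fst)).not.and hG.not)
    (hN ▸ hNinf)
  rw [← hN] at hu_range
  obtain ⟨f, heven, hodd⟩ := exists_equiv_nat_even_odd hUinf hu_inj hu_range
  have hu_not (k : ℕ) : ¬G.IsUniversal (u k) := hu_range.subset (mem_range_self k)
  refine ⟨G.comap f, G.computablePred_comap_adj hG hu heven hodd,
    ⟨(SimpleGraph.Iso.comap f G).symm⟩, ?_⟩
  exact ComputablePred.nat_even.of_eq fun m =>
    (SimpleGraph.isUniversal_comap_iff_even heven hodd hu_not m).symm
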